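/- CHSH-type bound for the Bell model: let p be the Bell table on the 4-cycle with contexts ab, bc, cd, da, where p_{ab} = (1/2, 0, 0, 1/2), p_{bc} = p_{cd} = (3/8, 1/8, 1/8, 3/8), p_{da} = (1/8, 3/8, 3/8, 1/8) (entries listed in order (0,0),(0,1),(1,0),(1,1)). If q is any probability distribution on functions {a,b,c,d} → {0,1} and λ ∈ [0,1] satisfies λ · (marginal of q on each context) ≤ p entrywise, then λ ≤ 3/4. Hence the non-contextual fraction of the Bell model is at most 3/4. -/
import Mathlib


open scoped Classical

/-- Bell model table on the 4-cycle: edge `k` joins measurements `k` and `k+1`. -/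
noncomputable def bellTable (k : Fin 4) (i j : Bool) : ℝ :=
  if k = 0 then (if i = j then 1/2 else 0)
  else if k = 3 then (if i = j then 1/8 else 3/8)
  else (if i = j then 3/8 else 1/8)

theorem stmt_16 (q : (Fin 4 → Bool) → ℝ) (hq0 : ∀ g, 0 ≤ q g)
    (hq1 : ∑ g : Fin 4 → Bool, q g = 1)
    (l : ℝ) (hl0 : 0 ≤ l) (hl1 : l ≤ 1)
    (h : ∀ k : Fin 4, ∀ i j : Bool,
      l * (∑ g : Fin 4 → Bool, if g k = i ∧ g (k + 1) = j then q g else 0) ≤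
        bellTable k i j) :
    l ≤ 3/4 := by
  have e0 : (0 : Fin 4) + 1 = 1 := by decide
  have e1 : (1 : Fin 4) + 1 = 2 := by decide
  have e2 : (2 : Fin 4) + 1 = 3 := by decide
  have e3 : (3 : Fin 4) + 1 = 0 := by decide
  have h0a := h 0 false true
  have h0b := h 0 true false
  have h1a := h 1 false true
  have h1b := h 1 true false
  have h2a := h 2 false true
  have h2b := h 2 true false
  have h3a := h 3 false false
  have h3b := h 3 true true
  rw [e0] at h0a h0b
  rw [e1] at h1a h1b
  rw [e2] at h2a h2b
  rw [e3] at h3a h3b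
  simp only [bellTable, show (1:Fin 4) ≠ 3 from by decide, show (2:Fin 4) ≠ 0 from by decide,
    show (2:Fin 4) ≠ 3 from by decide, show (3:Fin 4) ≠ 0 from by decide,
    show (1:Fin 4) ≠ 0 from by decide, if_true, if_false,
    ite_false, ite_true] at h0a h0b h1a h1b h2a h2b h3a h3b
  norm_num at h0a h0b h1a h1b h2a h2b h3a h3b
  have key : (1:ℝ) ≤
      (∑ g : Fin 4 → Bool, if g 0 = false ∧ g 1 = true then q g else 0) +
      (∑ g : Fin 4 → Bool, if g 0 = true ∧ g 1 = false then q g else 0) +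
      (∑ g : Fin 4 → Bool, if g 1 = false ∧ g 2 = true then q g else 0) +
      (∑ g : Fin 4 → Bool, if g 1 = true ∧ g 2 = false then q g else 0) +
      (∑ g : Fin 4 → Bool, if g 2 = false ∧ g 3 = true then q g else 0) +
      (∑ g : Fin 4 → Bool, if g 2 = true ∧ g 3 = false then q g else 0) +
      (∑ g : Fin 4 → Bool, if g 3 = false ∧ g 0 = false then q g else 0) +
      (∑ g : Fin 4 → Bool, if g 3 = true ∧ g 0 = true then q g else 0) := by
    rw [← hq1]
    simp only [← Finset.sum_add_distrib]
    apply Finset.sum_le_sum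
    intro g _
    have := hq0 g
    cases hg0 : g 0 <;> cases hg1 : g 1 <;> cases hg2 : g 2 <;> cases hg3 : g 3 <;>
      simp [hg0, hg1, hg2, hg3] <;> linarith
  nlinarith [mul_le_mul_of_nonneg_left key hl0]
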